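/- arXiv:2512.03093 — 4 statements merged into one kernel-verified Lean document; each statement's English description precedes it below -/
import Mathlib

section
/- Given a weakly decreasing N-tuple (i_1,...,i_N) with entries in {1,...,d}, the number of weakly decreasing N-tuples (j_1,...,j_N) with entries in {1,...,d} that are strictly greater than (i_1,...,i_N) in reflected lexicographic order equals Σ_{k=1}^{N} C(d+k-(i_k+1), k). -/
/-- Reflected lexicographic strict order on tuples: compare at the highest index
where they differ. -/
def rlexLt {N d : ℕ} (x y : Fin N → Fin d) : Prop :=
  ∃ k : Fin N, x k < y k ∧ ∀ l : Fin N, k < l → x l = y l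

instance {N d : ℕ} (x y : Fin N → Fin d) : Decidable (rlexLt x y) :=
  decidable_of_iff (∃ k : Fin N, x k < y k ∧ ∀ l : Fin N, k < l → x l = y l) Iff.rfl

-- auxiliary lemmas
lemma card_split {α : Type*} [Fintype α] (p q : α → Prop) [DecidablePred p] [DecidablePred q] :
    Fintype.card {x // p x} =
      Fintype.card {x // p x ∧ q x} + Fintype.card {x // p x ∧ ¬ q x} := by
  rw [← Fintype.card_congr (Equiv.subtypeSubtypeEquivSubtypeInter p q),
    ← Fintype.card_congr (Equiv.subtypeSubtypeEquivSubtypeInter p (fun x => ¬ q x)),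
    ← Fintype.card_sum]
  exact Fintype.card_congr (Equiv.sumCompl (fun x : {x // p x} => q x.1)).symm

lemma card_shift (d n : ℕ) (c : Fin d) :
    Fintype.card {j : Fin n → Fin d // (∀ a b : Fin n, a ≤ b → j b ≤ j a) ∧ ∀ k, c < j k} =
      Fintype.card {g : Fin n → Fin (d - ((c : ℕ) + 1)) // ∀ a b : Fin n, a ≤ b → g b ≤ g a} := by
  apply Fintype.card_congr
  refine ⟨fun j => ⟨fun k => ⟨(j.1 k : ℕ) - ((c : ℕ) + 1), ?_⟩, ?_⟩,
    fun g => ⟨fun k => ⟨(g.1 k : ℕ) + ((c : ℕ) + 1), ?_⟩, ?_, ?_⟩, ?_, ?_⟩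
  · have h1 := (j.1 k).isLt
    have h2 : (c : ℕ) < (j.1 k : ℕ) := j.2.2 k
    omega
  · intro a b hab
    have h1 : (j.1 b : ℕ) ≤ (j.1 a : ℕ) := j.2.1 a b hab
    exact Nat.sub_le_sub_right h1 _
  · have h1 := (g.1 k).isLt
    have h2 := c.isLt
    omega
  · intro a b hab
    have h1 : (g.1 b : ℕ) ≤ (g.1 a : ℕ) := g.2 a b hab
    simpa using h1
  · intro k
    show (c : ℕ) < (g.1 k : ℕ) + ((c : ℕ) + 1)
    omega
  · intro j
    apply Subtype.ext; funext k; apply Fin.ext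
    have h2 : (c : ℕ) < (j.1 k : ℕ) := j.2.2 k
    show ((j.1 k : ℕ) - ((c : ℕ) + 1)) + ((c : ℕ) + 1) = (j.1 k : ℕ)
    omega
  · intro g
    apply Subtype.ext; funext k; apply Fin.ext
    show ((g.1 k : ℕ) + ((c : ℕ) + 1)) - ((c : ℕ) + 1) = (g.1 k : ℕ)
    omega

private def toSym (m n : ℕ) (f : {f : Fin n → Fin m // Monotone f}) : Sym (Fin m) n :=
  ⟨(List.ofFn f.1 : Multiset (Fin m)), by simp⟩

lemma card_mono (m n : ℕ) :
    Fintype.card {f : Fin n → Fin m // Monotone f} = (m + n - 1).choose n := by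
  have h : Fintype.card {f : Fin n → Fin m // Monotone f} = Fintype.card (Sym (Fin m) n) := by
    apply Fintype.card_of_bijective (f := toSym m n)
    constructor
    · rintro ⟨f, hf⟩ ⟨g, hg⟩ h
      have h' : (List.ofFn f : Multiset (Fin m)) = (List.ofFn g : Multiset (Fin m)) :=
        congrArg Subtype.val h
      have hperm : (List.ofFn f).Perm (List.ofFn g) := Multiset.coe_eq_coe.mp h'
      have := List.Perm.eq_of_sortedLE hf.sortedLE_ofFn hg.sortedLE_ofFn hperm
      exact Subtype.ext (List.ofFn_injective this)
    · rintro ⟨s, hs⟩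
      set l := Multiset.sort s (· ≤ ·) with hl
      have hsort : l.Pairwise (· ≤ ·) := Multiset.pairwise_sort ..
      have hlen : l.length = n := by rw [hl, Multiset.length_sort]; exact hs
      refine ⟨⟨fun k => l.get (Fin.cast hlen.symm k), ?_⟩, ?_⟩
      · intro a b hab
        rcases eq_or_lt_of_le hab with h | h
        · subst h; exact le_refl _
        · exact List.pairwise_iff_get.mp hsort _ _ (by simpa using h)
      · apply Subtype.ext
        show ((List.ofFn (fun k : Fin n => l.get (Fin.cast hlen.symm k)) : List (Fin m)) : Multiset (Fin m)) = s
        have : List.ofFn (fun k : Fin n => l.get (Fin.cast hlen.symm k)) = l := by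
          apply List.ext_get (by simp [hlen])
          intro i h1 h2
          simp [List.get_ofFn]
        rw [this, hl, Multiset.sort_eq]
  rw [h, Sym.card_sym_eq_choose, Fintype.card_fin]

lemma card_anti (m n : ℕ) :
    Fintype.card {f : Fin n → Fin m // ∀ a b : Fin n, a ≤ b → f b ≤ f a} =
      (m + n - 1).choose n := by
  rw [← card_mono m n]
  apply Fintype.card_congr
  refine ⟨fun f => ⟨fun k => (f.1 k).rev, fun a b hab => Fin.rev_le_rev.mpr (f.2 a b hab)⟩,
    fun g => ⟨fun k => (g.1 k).rev, fun a b hab => Fin.rev_le_rev.mpr (g.2 hab)⟩, ?_, ?_⟩ <;>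
    (intro f; apply Subtype.ext; funext k; exact Fin.rev_rev _)

-- all values of j' are ≥ i (last N)
lemma lb_of_rlex {d N : ℕ} (i : Fin (N + 1) → Fin d)
    (hi : ∀ a b : Fin (N + 1), a ≤ b → i b ≤ i a) (j : Fin N → Fin d)
    (hj : ∀ a b : Fin N, a ≤ b → j b ≤ j a)
    (hr : rlexLt (fun k => i k.castSucc) j) (a : Fin N) : i (Fin.last N) ≤ j a := by
  obtain ⟨k, hk1, hk2⟩ := hr
  rcases le_or_gt a k with h | h
  · calc i (Fin.last N) ≤ i k.castSucc := hi _ _ (Fin.le_last _)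
      _ ≤ j k := le_of_lt hk1
      _ ≤ j a := hj a k h
  · rw [show j a = i a.castSucc from (hk2 a h).symm]
    exact hi _ _ (Fin.le_last _)

lemma card_eq_piece (d N : ℕ) (i : Fin (N + 1) → Fin d)
    (hi : ∀ a b : Fin (N + 1), a ≤ b → i b ≤ i a) :
    Fintype.card {j : Fin (N + 1) → Fin d //
        ((∀ a b : Fin (N + 1), a ≤ b → j b ≤ j a) ∧ rlexLt i j) ∧
          j (Fin.last N) = i (Fin.last N)} =
      Fintype.card {j : Fin N → Fin d //
        (∀ a b : Fin N, a ≤ b → j b ≤ j a) ∧ rlexLt (fun k => i k.castSucc) j} := by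
  apply Fintype.card_congr
  refine ⟨fun j => ⟨fun k => j.1 k.castSucc, ?_, ?_⟩,
    fun j => ⟨Fin.snoc j.1 (i (Fin.last N)), ⟨?_, ?_⟩, ?_⟩, ?_, ?_⟩
  · intro a b hab
    exact j.2.1.1 _ _ (Fin.castSucc_le_castSucc_iff.mpr hab)
  · -- rlex restricts
    obtain ⟨⟨hdec, k, hk1, hk2⟩, hlast⟩ := j.2
    have hkne : k ≠ Fin.last N := by
      intro h; rw [h, hlast] at hk1; exact lt_irrefl _ hk1
    obtain ⟨k₀, rfl⟩ := Fin.exists_castSucc_eq.mpr hkne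
    exact ⟨k₀, hk1, fun l hl => hk2 l.castSucc (Fin.castSucc_lt_castSucc_iff.mpr hl)⟩
  · -- snoc is decreasing
    intro a b hab
    cases b using Fin.lastCases with
    | last =>
      rw [Fin.snoc_last]
      cases a using Fin.lastCases with
      | last => rw [Fin.snoc_last]
      | cast a₀ =>
        rw [Fin.snoc_castSucc]
        exact lb_of_rlex i hi j.1 j.2.1 j.2.2 a₀
    | cast b₀ =>
      have hab' : a ≤ b₀.castSucc := hab
      have hane : a ≠ Fin.last N := by
        intro h; rw [h] at hab'
        exact absurd (lt_of_le_of_lt hab' (Fin.castSucc_lt_last b₀)) (lt_irrefl _)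
      obtain ⟨a₀, rfl⟩ := Fin.exists_castSucc_eq.mpr hane
      rw [Fin.snoc_castSucc, Fin.snoc_castSucc]
      exact j.2.1 a₀ b₀ (Fin.castSucc_le_castSucc_iff.mp hab')
  · -- rlex extends
    obtain ⟨hdec, k₀, hk1, hk2⟩ := j.2
    refine ⟨k₀.castSucc, by rwa [Fin.snoc_castSucc], ?_⟩
    intro l hl
    cases l using Fin.lastCases with
    | last => rw [Fin.snoc_last]
    | cast l₀ =>
      rw [Fin.snoc_castSucc]
      exact hk2 l₀ (Fin.castSucc_lt_castSucc_iff.mp hl)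
  · exact Fin.snoc_last _ _
  · intro j
    apply Subtype.ext; funext k
    dsimp only
    cases k using Fin.lastCases with
    | last => rw [Fin.snoc_last, j.2.2]
    | cast k₀ => rw [Fin.snoc_castSucc]
  · intro j
    apply Subtype.ext; funext k
    dsimp only
    exact Fin.snoc_castSucc _ _ _

lemma gt_iff_aux (d N : ℕ) (i : Fin (N + 1) → Fin d) (j : Fin (N + 1) → Fin d) :
    (((∀ a b : Fin (N + 1), a ≤ b → j b ≤ j a) ∧ rlexLt i j) ∧
        ¬ j (Fin.last N) = i (Fin.last N)) ↔
      ((∀ a b : Fin (N + 1), a ≤ b → j b ≤ j a) ∧ ∀ k, i (Fin.last N) < j k) := by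
  constructor
  · rintro ⟨⟨hdec, k, hk1, hk2⟩, hne⟩
    refine ⟨hdec, fun l => ?_⟩
    have hlast : i (Fin.last N) < j (Fin.last N) := by
      rcases eq_or_lt_of_le (Fin.le_last k) with h | h
      · rwa [← h]
      · exact absurd (hk2 _ h).symm hne
    exact lt_of_lt_of_le hlast (hdec l (Fin.last N) (Fin.le_last l))
  · rintro ⟨hdec, hgt⟩
    exact ⟨⟨hdec, Fin.last N, hgt _, fun l hl => absurd hl (Fin.le_last l).not_gt⟩,
      (hgt (Fin.last N)).ne'⟩

lemma main_aux (d : ℕ) : ∀ (N : ℕ) (i : Fin N → Fin d),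
    (∀ a b : Fin N, a ≤ b → i b ≤ i a) →
    Fintype.card {j : Fin N → Fin d //
        (∀ a b : Fin N, a ≤ b → j b ≤ j a) ∧ rlexLt i j} =
      ∑ k : Fin N, (d + (k.1 + 1) - (((i k : ℕ) + 1) + 1)).choose (k.1 + 1) := by
  intro N
  induction N with
  | zero =>
    intro i hi
    rw [Fintype.card_eq_zero_iff.mpr ⟨fun j => by obtain ⟨k, -⟩ := j.2.2; exact k.elim0⟩]
    simp
  | succ N ih =>
    intro i hi
    rw [card_split (fun j : Fin (N + 1) → Fin d =>
        (∀ a b : Fin (N + 1), a ≤ b → j b ≤ j a) ∧ rlexLt i j)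
      (fun j => j (Fin.last N) = i (Fin.last N))]
    have hi' : ∀ a b : Fin N, a ≤ b → i b.castSucc ≤ i a.castSucc :=
      fun a b hab => hi _ _ (Fin.castSucc_le_castSucc_iff.mpr hab)
    rw [card_eq_piece d N i hi, ih (fun k => i k.castSucc) hi']
    have h2 : Fintype.card {j : Fin (N + 1) → Fin d //
        ((∀ a b : Fin (N + 1), a ≤ b → j b ≤ j a) ∧ rlexLt i j) ∧
          ¬ j (Fin.last N) = i (Fin.last N)} =
        (d + (N + 1) - (((i (Fin.last N) : ℕ) + 1) + 1)).choose (N + 1) := by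
      rw [Fintype.card_congr (Equiv.subtypeEquivRight (gt_iff_aux d N i)),
        card_shift d (N + 1) (i (Fin.last N)), card_anti]
      have hlt : (i (Fin.last N) : ℕ) < d := (i (Fin.last N)).isLt
      congr 1
      omega
    rw [h2, Fin.sum_univ_castSucc]
    simp

/-- The number of weakly decreasing tuples strictly greater (in reflected
lexicographic order) than a given weakly decreasing tuple `i` equals
`Σ_{k=1}^N C(d+k-(i_k+1), k)` (entries written 1-based as `(i k : ℕ) + 1`). -/
theorem stmt3 (d N : ℕ) (i : Fin N → Fin d)
    (hi : ∀ a b : Fin N, a ≤ b → i b ≤ i a) :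
    Fintype.card {j : Fin N → Fin d //
        (∀ a b : Fin N, a ≤ b → j b ≤ j a) ∧ rlexLt i j} =
      ∑ k : Fin N, (d + (k.1 + 1) - (((i k : ℕ) + 1) + 1)).choose (k.1 + 1) := by
  exact main_aux d N i hi
end

section
/- For any cubical hypermatrix A of order N with side length d, hdet(A) = (1/d!) · (⊗_{k=1}^{N} ε) * (hvec(A), ..., hvec(A)), where ε is the d-dimensional Levi-Civita symbol, ⊗ is the N-fold tensor Kronecker product (giving an order-d hypermatrix with side length d^N), hvec(A) ∈ F^{d^N} is the canonical vectorization of A, and the multilinear matrix product uses d copies of hvec(A). -/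
/-- Cayley's first hyperdeterminant of a cubical hypermatrix of order `N` with
side length `d`:
`hdet A = (1/d!) Σ_{σ_1,...,σ_N ∈ S_d} (Π_k sgn σ_k) Π_i a_{σ_1(i)...σ_N(i)}`. -/
noncomputable def hdet {F : Type*} [Field F] {N d : ℕ}
    (A : (Fin N → Fin d) → F) : F :=
  (Nat.factorial d : F)⁻¹ *
    ∑ σ : Fin N → Equiv.Perm (Fin d),
      (∏ k, ((Equiv.Perm.sign (σ k) : ℤ) : F)) * ∏ i, A fun k => σ k i

/-- The `d`-dimensional Levi-Civita symbol: `ε_{j_1...j_d}` is the sign of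
`(j_1,...,j_d)` if it is a permutation of `(1,...,d)`, and `0` otherwise. -/
noncomputable def leviCivita {F : Type*} [Field F] (d : ℕ) (j : Fin d → Fin d) : F :=
  if h : Function.Bijective j then
    ((Equiv.Perm.sign (Equiv.ofBijective j h) : ℤ) : F) else 0

/-- The canonical vectorization `hvec(A) ∈ F^{d^N}` of a cubical hypermatrix,
where the entry at position `m` is the entry of `A` at the base-`d` digit tuple
of `m` (digit `k` being `m / d^k % d`, so the first index is least significant,
matching the reflected lexicographic ordering of entries). -/
def hvec {F : Type*} [Field F] {N d : ℕ} (A : (Fin N → Fin d) → F) :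
    Fin (d ^ N) → F :=
  fun m => A (finFunctionFinEquiv.symm m)

lemma leviCivita_perm {F : Type*} [Field F] {d : ℕ} (σ : Equiv.Perm (Fin d)) :
    leviCivita (F := F) d ⇑σ = ((Equiv.Perm.sign σ : ℤ) : F) := by
  have h : Equiv.ofBijective ⇑σ σ.bijective = σ := Equiv.ext fun x => rfl
  rw [leviCivita, dif_pos σ.bijective, h]

/-- `hdet(A) = (1/d!) (⊗_{k=1}^N ε) * (hvec A, ..., hvec A)`: the entry of the
`N`-fold tensor Kronecker power of the Levi-Civita symbol at
`(j_1,...,j_d) ∈ (Fin d^N)^d` is `Π_{k=1}^N ε` applied to the `k`-th digits of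
the `j_l`, and the multilinear product with `d` copies of `hvec A` is a scalar. -/
theorem stmt11 {F : Type*} [Field F] [CharZero F] (N d : ℕ)
    (A : (Fin N → Fin d) → F) :
    hdet A = (Nat.factorial d : F)⁻¹ *
      ∑ j : Fin d → Fin (d ^ N),
        (∏ k : Fin N, leviCivita d (fun l => finFunctionFinEquiv.symm (j l) k)) *
          ∏ l : Fin d, hvec A (j l) := by
  unfold hdet
  congr 1
  -- reindex RHS over g : Fin d → Fin N → Fin d
  let e : (Fin d → Fin N → Fin d) ≃ (Fin d → Fin (d ^ N)) :=
    Equiv.piCongrRight fun _ => finFunctionFinEquiv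
  rw [← Fintype.sum_equiv e
      (fun g => (∏ k : Fin N, leviCivita (F := F) d (fun l => g l k)) * ∏ l, A (g l))
      (fun j => (∏ k : Fin N, leviCivita d (fun l => finFunctionFinEquiv.symm (j l) k)) *
          ∏ l : Fin d, hvec A (j l))
      (fun g => by simp [e, hvec])]
  -- now restrict to g whose slices are all bijective
  conv_rhs => rw [← Finset.sum_filter_of_ne
      (p := fun g : Fin d → Fin N → Fin d => ∀ k : Fin N, Function.Bijective fun l => g l k)
      (fun g _ hne => by
        by_contra hb
        obtain ⟨k, hk⟩ := not_forall.mp hb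
        apply hne
        rw [Finset.prod_eq_zero (Finset.mem_univ k)
          (show leviCivita (F := F) d (fun l => g l k) = 0 from dif_neg hk), zero_mul])]
  symm
  apply Finset.sum_bij'
    (i := fun g (hg : g ∈ Finset.filter
        (fun g : Fin d → Fin N → Fin d => ∀ k : Fin N, Function.Bijective fun l => g l k)
        Finset.univ) => fun k => Equiv.ofBijective (fun l => g l k)
      ((Finset.mem_filter.mp hg).2 k))
    (j := fun (s : Fin N → Equiv.Perm (Fin d)) _ => fun l k => s k l)
  · intro g _
    exact Finset.mem_univ _
  · intro g _
    funext l k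
    rfl
  · intro s _
    funext k
    exact Equiv.ext fun l => rfl
  · intro g hg
    congr 1
    refine Finset.prod_congr rfl fun k _ => ?_
    have := leviCivita_perm (F := F) (Equiv.ofBijective (fun l => g l k)
      ((Finset.mem_filter.mp hg).2 k))
    rw [← this]
    rfl
  · intro s _
    simp only [Finset.mem_filter, Finset.mem_univ, true_and]
    intro k
    exact (s k).bijective
end

section
/- The generalized elimination matrix L_d^(N) := Σ_{d ≥ i_1 ≥ ... ≥ i_N ≥ 1} u_{i_1...i_N} · hvec(E_{i_1...i_N})^T, a C(d+N-1,N) × d^N matrix, satisfies L_d^(N) hvec(A) = hvec_{1/N}(A) for every symmetric cubical hypermatrix A of order N with side length d. -/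
/-- The 1-based placement `P(i_1,...,i_N) = C(d+N-1,N) - Σ_{k=1}^N C(d+k-(i_k+1), k)`
of a weakly decreasing tuple in the reflected lexicographic order (entries
written 1-based as `(f k : ℕ) + 1`). -/
def posNum {N d : ℕ} (f : Fin N → Fin d) : ℕ :=
  (d + N - 1).choose N -
    ∑ k : Fin N, (d + (k.1 + 1) - (((f k : ℕ) + 1) + 1)).choose (k.1 + 1)

/-- The 0-based position in `Fin (C(d+N-1,N))` corresponding to `posNum`. -/
def posIdx {N d : ℕ} (hd : 0 < d) (f : Fin N → Fin d) :
    Fin ((d + N - 1).choose N) :=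
  ⟨posNum f - 1, by
    have hC : 0 < (d + N - 1).choose N := Nat.choose_pos (by omega)
    have h1 : posNum f ≤ (d + N - 1).choose N := Nat.sub_le _ _
    omega⟩

/-- The `1/N`-th hypermatrix vectorization
`hvec_{1/N}(A) = Σ_{d ≥ i_1 ≥ ... ≥ i_N ≥ 1} a_{i_1...i_N} u_{i_1...i_N}`. -/
noncomputable def hvec1N {F : Type*} [Field F] {N d : ℕ} (hd : 0 < d)
    (A : (Fin N → Fin d) → F) : Fin ((d + N - 1).choose N) → F :=
  ∑ i ∈ Finset.univ.filter (fun i : Fin N → Fin d => ∀ a b : Fin N, a ≤ b → i b ≤ i a),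
    A i • (Pi.single (posIdx hd i) (1 : F) : Fin ((d + N - 1).choose N) → F)

/-- The generalized elimination matrix
`L_d^(N) = Σ_{d ≥ i_1 ≥ ... ≥ i_N ≥ 1} u_{i_1...i_N} · hvec(E_{i_1...i_N})^T`. -/
noncomputable def elimMatrix (F : Type*) [Field F] (N d : ℕ) (hd : 0 < d) :
    Matrix (Fin ((d + N - 1).choose N)) (Fin (d ^ N)) F :=
  ∑ i ∈ Finset.univ.filter (fun i : Fin N → Fin d => ∀ a b : Fin N, a ≤ b → i b ≤ i a),
    Matrix.of fun r c =>
      (Pi.single (posIdx hd i) (1 : F) : Fin ((d + N - 1).choose N) → F) r *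
        (Pi.single (finFunctionFinEquiv i) (1 : F) : Fin (d ^ N) → F) c

/-- `L_d^(N) hvec(A) = hvec_{1/N}(A)` for every symmetric cubical hypermatrix `A`. -/
theorem stmt13 {F : Type*} [Field F] (N d : ℕ) (hd : 0 < d)
    (A : (Fin N → Fin d) → F)
    (hA : ∀ σ : Equiv.Perm (Fin N), ∀ i : Fin N → Fin d,
      A (fun k => i (σ k)) = A i) :
    (elimMatrix F N d hd).mulVec (hvec A) = hvec1N hd A := by
  funext r
  simp only [Matrix.mulVec, dotProduct, elimMatrix, hvec1N, Finset.sum_apply,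
    Matrix.sum_apply, Matrix.of_apply, Finset.sum_mul, Pi.smul_apply, smul_eq_mul]
  rw [Finset.sum_comm]
  refine Finset.sum_congr rfl fun i _ => ?_
  rw [Finset.sum_eq_single (finFunctionFinEquiv i)]
  · simp [hvec, mul_comm]
  · intro c _ hc; simp [Pi.single_eq_of_ne hc]
  · simp
end

section
/- The generalized duplication matrix D_d^(N) := Σ_{d ≥ i_1 ≥ ... ≥ i_N ≥ 1} hvec(T_{i_1...i_N}) · u_{i_1...i_N}^T, a d^N × C(d+N-1,N) matrix, satisfies D_d^(N) hvec_{1/N}(A) = hvec(A) for every symmetric cubical hypermatrix A of order N with side length d. -/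
/-- The set of distinct permutations of the index tuple `i`, i.e. the orbit of
`i` under the coordinate-permuting action of `S_N`. -/
def permClass {N d : ℕ} (i : Fin N → Fin d) : Finset (Fin N → Fin d) :=
  Finset.univ.filter fun j => ∃ σ : Equiv.Perm (Fin N), (fun k => i (σ k)) = j


section Aux

open Finset

lemma cns_bound (c : ℕ → ℕ) (hc : ∀ k, c k < c (k + 1)) (m : ℕ) :
    ∑ k ∈ Finset.range (m + 1), (c k).choose (k + 1) < (c m + 1).choose (m + 1) := by
  induction m with
  | zero => simp [Nat.choose_one_right]
  | succ m ih =>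
      rw [Finset.sum_range_succ]
      have h1 : (c m + 1).choose (m + 1) ≤ (c (m + 1)).choose (m + 1) :=
        Nat.choose_le_choose _ (hc m)
      have h2 : (c (m + 1) + 1).choose (m + 1 + 1) =
          (c (m + 1)).choose (m + 1) + (c (m + 1)).choose (m + 1 + 1) :=
        Nat.choose_succ_succ _ _
      omega

lemma cns_lt (N : ℕ) (c c' : ℕ → ℕ) (hc : ∀ k, c k < c (k + 1))
    (h : c N < c' N) :
    ∑ k ∈ Finset.range (N + 1), (c k).choose (k + 1) <
      ∑ k ∈ Finset.range (N + 1), (c' k).choose (k + 1) := by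
  have hb := cns_bound c hc N
  have h1 : (c N + 1).choose (N + 1) ≤ (c' N).choose (N + 1) :=
    Nat.choose_le_choose _ h
  rw [Finset.sum_range_succ (fun k => (c' k).choose (k + 1))]
  have : (0:ℕ) ≤ ∑ k ∈ Finset.range N, (c' k).choose (k + 1) := Nat.zero_le _
  omega

lemma cns_inj (N : ℕ) : ∀ (c c' : ℕ → ℕ), (∀ k, c k < c (k + 1)) →
    (∀ k, c' k < c' (k + 1)) →
    (∑ k ∈ Finset.range N, (c k).choose (k + 1) =
      ∑ k ∈ Finset.range N, (c' k).choose (k + 1)) →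
    ∀ k < N, c k = c' k := by
  induction N with
  | zero => intro _ _ _ _ _ k hk; omega
  | succ N ih =>
      intro c c' hc hc' hsum
      have htop : c N = c' N := by
        rcases lt_trichotomy (c N) (c' N) with h | h | h
        · exact absurd hsum (Nat.ne_of_lt (cns_lt N c c' hc h))
        · exact h
        · exact absurd hsum.symm (Nat.ne_of_lt (cns_lt N c' c hc' h))
      have hpre : ∑ k ∈ Finset.range N, (c k).choose (k + 1) =
          ∑ k ∈ Finset.range N, (c' k).choose (k + 1) := by
        rw [Finset.sum_range_succ, Finset.sum_range_succ, htop] at hsum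
        omega
      intro k hk
      rcases Nat.lt_succ_iff_lt_or_eq.mp hk with h | h
      · exact ih c c' hc hc' hpre k h
      · rw [h]; exact htop

/-- Extension of the strictly increasing sequence associated to an antitone tuple. -/
def cfun {N d : ℕ} (f : Fin N → Fin d) : ℕ → ℕ :=
  fun k => if h : k < N then d + k - 1 - (f ⟨k, h⟩ : ℕ) else d + k

lemma cfun_strictMono {N d : ℕ} (hd : 0 < d) {f : Fin N → Fin d}
    (hf : ∀ a b : Fin N, a ≤ b → f b ≤ f a) (k : ℕ) :
    cfun f k < cfun f (k + 1) := by
  unfold cfun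
  by_cases h1 : k + 1 < N
  · have hk : k < N := by omega
    rw [dif_pos hk, dif_pos h1]
    have hle : (f ⟨k + 1, h1⟩ : ℕ) ≤ (f ⟨k, hk⟩ : ℕ) := by
      exact_mod_cast hf ⟨k, hk⟩ ⟨k + 1, h1⟩ (by simp [Fin.le_def])
    have h2 : (f ⟨k, hk⟩ : ℕ) < d := (f ⟨k, hk⟩).isLt
    omega
  · rw [dif_neg h1]
    by_cases hk : k < N
    · rw [dif_pos hk]; omega
    · rw [dif_neg hk]; omega

lemma sum_choose_eq {N d : ℕ} (f : Fin N → Fin d) :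
    ∑ k : Fin N, (d + (k.1 + 1) - (((f k : ℕ) + 1) + 1)).choose (k.1 + 1) =
      ∑ k ∈ Finset.range N, (cfun f k).choose (k + 1) := by
  rw [← Fin.sum_univ_eq_sum_range (fun k => (cfun f k).choose (k + 1)) N]
  apply Finset.sum_congr rfl
  intro k _
  congr 1
  have h2 : (f k : ℕ) < d := (f k).isLt
  simp only [cfun, dif_pos k.isLt, Fin.eta]
  omega

lemma sum_choose_lt {N d : ℕ} (hd : 0 < d) {f : Fin N → Fin d}
    (hf : ∀ a b : Fin N, a ≤ b → f b ≤ f a) :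
    ∑ k : Fin N, (d + (k.1 + 1) - (((f k : ℕ) + 1) + 1)).choose (k.1 + 1) <
      (d + N - 1).choose N := by
  rw [sum_choose_eq]
  cases N with
  | zero => simp
  | succ n =>
      have hb := cns_bound (cfun f) (cfun_strictMono hd hf) n
      have h1 : cfun f n + 1 ≤ d + (n + 1) - 1 := by
        have hn : n < n + 1 := Nat.lt_succ_self n
        simp only [cfun, dif_pos hn]
        omega
      exact lt_of_lt_of_le hb (Nat.choose_le_choose _ h1)

lemma posNum_pos {N d : ℕ} (hd : 0 < d) {f : Fin N → Fin d}
    (hf : ∀ a b : Fin N, a ≤ b → f b ≤ f a) : 1 ≤ posNum f := by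
  have := sum_choose_lt hd hf
  unfold posNum
  omega

lemma posIdx_inj {N d : ℕ} (hd : 0 < d) {f f' : Fin N → Fin d}
    (hf : ∀ a b : Fin N, a ≤ b → f b ≤ f a)
    (hf' : ∀ a b : Fin N, a ≤ b → f' b ≤ f' a)
    (h : posIdx hd f = posIdx hd f') : f = f' := by
  have h1 : posNum f - 1 = posNum f' - 1 := congrArg Fin.val h
  have h2 := posNum_pos hd hf
  have h3 := posNum_pos hd hf'
  have h4 := sum_choose_lt hd hf
  have h5 := sum_choose_lt hd hf'
  unfold posNum at h1 h2 h3
  have hS : ∑ k : Fin N, (d + (k.1 + 1) - (((f k : ℕ) + 1) + 1)).choose (k.1 + 1) =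
      ∑ k : Fin N, (d + (k.1 + 1) - (((f' k : ℕ) + 1) + 1)).choose (k.1 + 1) := by omega
  rw [sum_choose_eq, sum_choose_eq] at hS
  have hc := cns_inj N (cfun f) (cfun f') (cfun_strictMono hd hf) (cfun_strictMono hd hf') hS
  funext k
  have hk := hc k.1 k.isLt
  simp only [cfun, dif_pos k.isLt, Fin.eta] at hk
  have h6 : (f k : ℕ) < d := (f k).isLt
  have h7 : (f' k : ℕ) < d := (f' k).isLt
  exact Fin.ext (by omega)

lemma hvec1N_apply {F : Type*} [Field F] {N d : ℕ} (hd : 0 < d)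
    (A : (Fin N → Fin d) → F) {i : Fin N → Fin d}
    (hi : ∀ a b : Fin N, a ≤ b → i b ≤ i a) :
    hvec1N hd A (posIdx hd i) = A i := by
  unfold hvec1N
  rw [Finset.sum_apply]
  rw [Finset.sum_eq_single_of_mem i (Finset.mem_filter.mpr ⟨Finset.mem_univ _, hi⟩)]
  · simp
  · intro i' hi' hne
    have hi'd : ∀ a b : Fin N, a ≤ b → i' b ≤ i' a := (Finset.mem_filter.mp hi').2
    have : posIdx hd i ≠ posIdx hd i' := fun h => hne (posIdx_inj hd hi'd hi h.symm)
    rw [Pi.smul_apply, Pi.single_eq_of_ne this, smul_zero]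

lemma sum_mulVec_aux {F K : Type*} [Field F] {n m : ℕ} (s : Finset K)
    (M : K → Matrix (Fin n) (Fin m) F) (v : Fin m → F) :
    (∑ i ∈ s, M i).mulVec v = ∑ i ∈ s, (M i).mulVec v := by
  ext r
  simp only [Matrix.mulVec, dotProduct, Finset.sum_apply, Matrix.sum_apply,
    Finset.sum_mul]
  exact Finset.sum_comm

end Aux

/-- The generalized duplication matrix
`D_d^(N) = Σ_{d ≥ i_1 ≥ ... ≥ i_N ≥ 1} hvec(T_{i_1...i_N}) · u_{i_1...i_N}^T`,
where `T_{i_1...i_N} = Σ_{σ ∈ S_N/Stab(i)} E_{i_{σ(1)}...i_{σ(N)}}`. -/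
noncomputable def dupMatrix (F : Type*) [Field F] (N d : ℕ) (hd : 0 < d) :
    Matrix (Fin (d ^ N)) (Fin ((d + N - 1).choose N)) F :=
  ∑ i ∈ Finset.univ.filter (fun i : Fin N → Fin d => ∀ a b : Fin N, a ≤ b → i b ≤ i a),
    Matrix.of fun r c =>
      (∑ j ∈ permClass i, (Pi.single (finFunctionFinEquiv j) (1 : F) : Fin (d ^ N) → F) r) *
        (Pi.single (posIdx hd i) (1 : F) : Fin ((d + N - 1).choose N) → F) c

/-- `D_d^(N) hvec_{1/N}(A) = hvec(A)` for every symmetric cubical hypermatrix `A`. -/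
theorem stmt14 {F : Type*} [Field F] (N d : ℕ) (hd : 0 < d)
    (A : (Fin N → Fin d) → F)
    (hA : ∀ σ : Equiv.Perm (Fin N), ∀ i : Fin N → Fin d,
      A (fun k => i (σ k)) = A i) :
    (dupMatrix F N d hd).mulVec (hvec1N hd A) = hvec A := by
  funext r
  set j : Fin N → Fin d := finFunctionFinEquiv.symm r with hj
  have hrj : finFunctionFinEquiv j = r := finFunctionFinEquiv.apply_symm_apply r
  -- the antitone sort of j
  set σ : Equiv.Perm (Fin N) := Tuple.sort (OrderDual.toDual ∘ j) with hσ
  set i₀ : Fin N → Fin d := fun k => j (σ k) with hi₀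
  have hmono : Monotone ((OrderDual.toDual ∘ j) ∘ ⇑σ) := Tuple.monotone_sort _
  have hi₀dec : ∀ a b : Fin N, a ≤ b → i₀ b ≤ i₀ a := by
    intro a b hab
    exact hmono hab
  have hji₀ : ∃ τ : Equiv.Perm (Fin N), (fun k => i₀ (τ k)) = j := by
    refine ⟨σ⁻¹, funext fun k => ?_⟩
    simp [hi₀]
  -- uniqueness of the antitone representative
  have huniq : ∀ i : Fin N → Fin d, (∀ a b : Fin N, a ≤ b → i b ≤ i a) →
      (∃ τ : Equiv.Perm (Fin N), (fun k => i (τ k)) = j) → i = i₀ := by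
    intro i hidec ⟨τ, hτ⟩
    have hanti : Antitone i := fun a b hab => hidec a b hab
    have h1 : Monotone ((OrderDual.toDual ∘ i) ∘ ⇑(τ * σ)) := by
      have : (OrderDual.toDual ∘ i) ∘ ⇑(τ * σ) = (OrderDual.toDual ∘ j) ∘ ⇑σ := by
        funext k
        simp only [Function.comp_apply, Equiv.Perm.mul_apply]
        rw [← hτ]
      rw [this]; exact hmono
    have h2 : Monotone ((OrderDual.toDual ∘ i) ∘ ⇑(1 : Equiv.Perm (Fin N))) := by
      simpa using hanti.dual_right
    have h3 := Tuple.unique_monotone h1 h2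
    funext k
    have h4 := congrFun h3 k
    simp only [Function.comp_apply, Equiv.Perm.mul_apply, Equiv.Perm.coe_one, id_eq] at h4
    have h5 : i (τ (σ k)) = i k := OrderDual.toDual.injective h4
    calc i k = i (τ (σ k)) := h5.symm
      _ = j (σ k) := congrFun hτ (σ k)
  -- compute the left-hand side
  have key : ∀ i : Fin N → Fin d,
      (Matrix.of fun r c =>
        (∑ j' ∈ permClass i, (Pi.single (finFunctionFinEquiv j') (1 : F) :
            Fin (d ^ N) → F) r) *
          (Pi.single (posIdx hd i) (1 : F) : Fin ((d + N - 1).choose N) → F) c).mulVec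
        (hvec1N hd A) r =
      (∑ j' ∈ permClass i, (Pi.single (finFunctionFinEquiv j') (1 : F) :
          Fin (d ^ N) → F) r) * hvec1N hd A (posIdx hd i) := by
    intro i
    unfold Matrix.mulVec dotProduct
    rw [Finset.sum_eq_single_of_mem (posIdx hd i) (Finset.mem_univ _)]
    · simp
    · intro c _ hne
      simp [Pi.single_eq_of_ne hne]
  have hsingle : ∀ i : Fin N → Fin d,
      (∑ j' ∈ permClass i, (Pi.single (finFunctionFinEquiv j') (1 : F) :
          Fin (d ^ N) → F) r) = if j ∈ permClass i then 1 else 0 := by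
    intro i
    by_cases hmem : j ∈ permClass i
    · rw [if_pos hmem]
      rw [Finset.sum_eq_single_of_mem j hmem]
      · rw [hrj]; simp
      · intro j' _ hne
        have hne2 : r ≠ finFunctionFinEquiv j' := by
          rw [← hrj]; exact fun h => hne (finFunctionFinEquiv.injective h.symm)
        exact Pi.single_eq_of_ne hne2 1
    · rw [if_neg hmem]
      apply Finset.sum_eq_zero
      intro j' hj'
      have hne2 : r ≠ finFunctionFinEquiv j' := by
        rw [← hrj]
        intro h
        exact hmem (finFunctionFinEquiv.injective h.symm ▸ hj')
      exact Pi.single_eq_of_ne hne2 1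
  rw [dupMatrix, sum_mulVec_aux, Finset.sum_apply]
  have hsum : ∀ i ∈ Finset.univ.filter
      (fun i : Fin N → Fin d => ∀ a b : Fin N, a ≤ b → i b ≤ i a),
      (Matrix.of fun r c =>
        (∑ j' ∈ permClass i, (Pi.single (finFunctionFinEquiv j') (1 : F) :
            Fin (d ^ N) → F) r) *
          (Pi.single (posIdx hd i) (1 : F) : Fin ((d + N - 1).choose N) → F) c).mulVec
        (hvec1N hd A) r = (if j ∈ permClass i then 1 else 0) * A i := by
    intro i hi
    rw [key i, hsingle i, hvec1N_apply hd A (Finset.mem_filter.mp hi).2]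
  rw [Finset.sum_congr rfl hsum]
  have hi₀mem : i₀ ∈ Finset.univ.filter
      (fun i : Fin N → Fin d => ∀ a b : Fin N, a ≤ b → i b ≤ i a) :=
    Finset.mem_filter.mpr ⟨Finset.mem_univ _, hi₀dec⟩
  rw [Finset.sum_eq_single_of_mem i₀ hi₀mem]
  · have hmem : j ∈ permClass i₀ := Finset.mem_filter.mpr ⟨Finset.mem_univ _, hji₀⟩
    rw [if_pos hmem, one_mul]
    have := hA σ j
    rw [hvec]
    rw [← hj, ← this]
  · intro i hi hne
    have hidec := (Finset.mem_filter.mp hi).2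
    have : j ∉ permClass i := by
      intro hmem
      exact hne (huniq i hidec (Finset.mem_filter.mp hmem).2)
    rw [if_neg this, zero_mul]
end
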